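/- For all natural numbers b, c ≥ 0 and a ≥ 1, the following identity holds in M₂(R): 2^{a+b+c+1}·(xu − yv)·tᵃuᵇvᶜ = [x,y,x]·(ad x)^{2a−1}·(ad y)^{2b+1}·(ad x ad y)ᶜ. -/

import Mathlib

/-!
For traceless `2 × 2` matrices one has `w² = ½ tr(w²)` and `zw + wz = tr(zw)`, whence
`[z, w, w] = 2 tr(w²) z - 2 tr(zw) w`. Taking `z = [x, y]`, whose products with `x` and `y` are
traceless, makes `[x, y]` an eigenvector of `(ad x)²` and `(ad y)²` with eigenvalues `2t` and `2u`;
moreover `[x, y] (ad y) = 2 (ux - vy)`, and `ux - vy` is an eigenvector of `ad x ad y` with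
eigenvalue `2v`. As `ad` commutes with scalars, the right-hand side collapses to
`(2t)ᵃ (2u)ᵇ · 2 · (2v)ᶜ (ux - vy)`.
-/

open Matrix MvPolynomial

noncomputable section

variable (K : Type*) [Field K] [CharZero K]

/-- The first generic traceless 2×2 matrix `x = !![x₁₁, x₁₂; x₂₁, -x₁₁]` over
`R = K[x₁₁,x₁₂,x₂₁,y₁₁,y₁₂,y₂₁]`, realized as `MvPolynomial (Fin 6) K` with
`x₁₁ = X 0, x₁₂ = X 1, x₂₁ = X 2, y₁₁ = X 3, y₁₂ = X 4, y₂₁ = X 5`. -/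
def x : Matrix (Fin 2) (Fin 2) (MvPolynomial (Fin 6) K) := !![X 0, X 1; X 2, -(X 0)]

/-- The second generic traceless 2×2 matrix `y = !![y₁₁, y₁₂; y₂₁, -y₁₁]`. -/
def y : Matrix (Fin 2) (Fin 2) (MvPolynomial (Fin 6) K) := !![X 3, X 4; X 5, -(X 3)]

/-- `t = tr(x²)`. -/
def t : MvPolynomial (Fin 6) K := (x K * x K).trace

/-- `u = tr(y²)`. -/
def u : MvPolynomial (Fin 6) K := (y K * y K).trace

/-- `v = tr(xy)`. -/
def v : MvPolynomial (Fin 6) K := (x K * y K).trace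

/-- The right adjoint action `z ↦ z(ad w) = [z,w]`. -/
def ad (w z : Matrix (Fin 2) (Fin 2) (MvPolynomial (Fin 6) K)) :
    Matrix (Fin 2) (Fin 2) (MvPolynomial (Fin 6) K) := ⁅z, w⁆

end

theorem Matrix.lie_lie_self_of_trace_eq_zero {R : Type*} [CommRing R]
    {z w : Matrix (Fin 2) (Fin 2) R} (hz : z.trace = 0) (hw : w.trace = 0) :
    ⁅⁅z, w⁆, w⁆ = (2 * (w * w).trace) • z - (2 * (z * w).trace) • w := by
  rw [trace_fin_two] at hz hw
  have hz' : z 1 1 = -z 0 0 := by linear_combination hz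
  have hw' : w 1 1 = -w 0 0 := by linear_combination hw
  ext i j
  fin_cases i <;> fin_cases j <;>
    simp [Ring.lie_def, trace_fin_two, mul_apply, Fin.sum_univ_two, hz', hw'] <;> ring

theorem Matrix.trace_lie_mul_left {R n : Type*} [CommRing R] [Fintype n]
    (z w : Matrix n n R) : (⁅z, w⁆ * z).trace = 0 := by
  rw [Ring.lie_def, sub_mul, trace_sub, trace_mul_cycle w, sub_self]

theorem Matrix.trace_lie_mul_right {R n : Type*} [CommRing R] [Fintype n]
    (z w : Matrix n n R) : (⁅z, w⁆ * w).trace = 0 := by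
  rw [Ring.lie_def, sub_mul, trace_sub, trace_mul_cycle z, sub_self]

theorem Function.iterate_map_smul {R M : Type*} [SMul R M] {f : M → M}
    (hf : ∀ (s : R) (m : M), f (s • m) = s • f m) (n : ℕ) (s : R) (m : M) :
    f^[n] (s • m) = s • f^[n] m :=
  Function.Commute.iterate_left (g := (s • ·)) (hf s) n m

theorem Function.iterate_mul_apply_of_iterate_eq_smul {R M : Type*} [Monoid R] [MulAction R M]
    {f : M → M} (hf : ∀ (s : R) (m : M), f (s • m) = s • f m) {k : ℕ} {m : M} {s : R}
    (h : f^[k] m = s • m) (n : ℕ) : f^[k * n] m = s ^ n • m := by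
  induction n with
  | zero => simp
  | succ n ih =>
    rw [Nat.mul_succ, Function.iterate_add_apply, h, Function.iterate_map_smul hf, ih, smul_smul,
      pow_succ']

section GenericMatrices

variable (K : Type*) [Field K]

theorem trace_x : (x K).trace = 0 := by simp [x, trace_fin_two]

theorem trace_y : (y K).trace = 0 := by simp [y, trace_fin_two]

theorem ad_smul (w : Matrix (Fin 2) (Fin 2) (MvPolynomial (Fin 6) K))
    (s : MvPolynomial (Fin 6) K) (z : Matrix (Fin 2) (Fin 2) (MvPolynomial (Fin 6) K)) :
    ad K w (s • z) = s • ad K w z := by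
  simp only [ad, Ring.lie_def, smul_mul_assoc, mul_smul_comm, smul_sub]

theorem ad_comp_ad_smul (w w' : Matrix (Fin 2) (Fin 2) (MvPolynomial (Fin 6) K))
    (s : MvPolynomial (Fin 6) K) (z : Matrix (Fin 2) (Fin 2) (MvPolynomial (Fin 6) K)) :
    (ad K w ∘ ad K w') (s • z) = s • (ad K w ∘ ad K w') z := by
  simp only [Function.comp_apply, ad_smul]

theorem ad_x_iterate_two_lie_x_y : (ad K (x K))^[2] ⁅x K, y K⁆ = (2 * t K) • ⁅x K, y K⁆ := by
  rw [Function.iterate_succ_apply, Function.iterate_one, ad, ad,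
    lie_lie_self_of_trace_eq_zero (LieAlgebra.matrix_trace_commutator_zero _ _ _ _) (trace_x K),
    trace_lie_mul_left, mul_zero, zero_smul, sub_zero, t]

theorem ad_y_iterate_two_lie_x_y : (ad K (y K))^[2] ⁅x K, y K⁆ = (2 * u K) • ⁅x K, y K⁆ := by
  rw [Function.iterate_succ_apply, Function.iterate_one, ad, ad,
    lie_lie_self_of_trace_eq_zero (LieAlgebra.matrix_trace_commutator_zero _ _ _ _) (trace_y K),
    trace_lie_mul_right, mul_zero, zero_smul, sub_zero, u]

theorem ad_y_lie_x_y :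
    ad K (y K) ⁅x K, y K⁆ = (2 : MvPolynomial (Fin 6) K) • (u K • x K - v K • y K) := by
  rw [ad, lie_lie_self_of_trace_eq_zero (trace_x K) (trace_y K), smul_sub, smul_smul, smul_smul,
    u, v]

theorem ad_y_comp_ad_x_ux_sub_vy :
    (ad K (y K) ∘ ad K (x K)) (u K • x K - v K • y K) =
      (2 * v K) • (u K • x K - v K • y K) := by
  have h_ad_x : ad K (x K) (u K • x K - v K • y K) = v K • ⁅x K, y K⁆ := by
    simp only [ad, Ring.lie_def, sub_mul, mul_sub, smul_mul_assoc, mul_smul_comm, smul_sub]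
    abel
  rw [Function.comp_apply, h_ad_x, ad_smul, ad_y_lie_x_y, smul_smul, mul_comm]

end GenericMatrices

variable (K : Type*) [Field K] [CharZero K]

/-- For `b, c ≥ 0` and `a ≥ 1`:
`2^{a+b+c+1}(xu − yv)tᵃuᵇvᶜ = [x,y,x](ad x)^{2a−1}(ad y)^{2b+1}(ad x ad y)ᶜ`. -/
theorem stmt_7 (a b c : ℕ) (ha : 1 ≤ a) :
    ((2 : MvPolynomial (Fin 6) K) ^ (a + b + c + 1) * t K ^ a * u K ^ b * v K ^ c) •
        (u K • x K - v K • y K) =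
      (ad K (y K) ∘ ad K (x K))^[c]
        ((ad K (y K))^[2 * b + 1] ((ad K (x K))^[2 * a - 1] ⁅⁅x K, y K⁆, x K⁆)) := by
  have h_start :
      (ad K (x K))^[2 * a - 1] ⁅⁅x K, y K⁆, x K⁆ = (ad K (x K))^[2 * a] ⁅x K, y K⁆ := by
    rw [show 2 * a = 2 * a - 1 + 1 by omega, Function.iterate_succ_apply]
    rfl
  have h_ad_x :=
    Function.iterate_mul_apply_of_iterate_eq_smul (ad_smul K _) (ad_x_iterate_two_lie_x_y K) a
  have h_ad_y :=
    Function.iterate_mul_apply_of_iterate_eq_smul (ad_smul K _) (ad_y_iterate_two_lie_x_y K) b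
  have h_ad_x_ad_y := Function.iterate_mul_apply_of_iterate_eq_smul (k := 1)
    (ad_comp_ad_smul K _ _) (ad_y_comp_ad_x_ux_sub_vy K) c
  rw [one_mul] at h_ad_x_ad_y
  rw [h_start, h_ad_x, Function.iterate_map_smul (ad_smul K _), Function.iterate_succ_apply',
    h_ad_y, ad_smul, ad_y_lie_x_y]
  simp only [Function.iterate_map_smul (ad_comp_ad_smul K _ _), h_ad_x_ad_y, smul_smul]
  refine congrArg (· • (u K • x K - v K • y K)) ?_
  ring
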